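/- Define 𝔩₁(s,t) = s²(−t⁴+2t³+12t²+16t−20) + 2s(2t⁵−7t⁴−24t³+68t²−42t+12) + (4t⁶−4t⁵−93t⁴+78t³+240t²−408t+192). Then 𝔩₁(s,t) ≥ 0 for every (s,t) ∈ ℝ² satisfying 0 ≤ s ≤ 2√2, s+t ≥ 0, and t ≤ 1/2. -/
import Mathlib


noncomputable def frakl1 (s t : ℝ) : ℝ :=
  s^2 * (-t^4 + 2*t^3 + 12*t^2 + 16*t - 20)
  + 2*s * (2*t^5 - 7*t^4 - 24*t^3 + 68*t^2 - 42*t + 12)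
  + (4*t^6 - 4*t^5 - 93*t^4 + 78*t^3 + 240*t^2 - 408*t + 192)

/-- The coefficient of `s^2` in `frakl1` is nonpositive for `t ≤ 1/2`. -/
lemma lemA (t : ℝ) (h : t ≤ 1/2) : -t^4 + 2*t^3 + 12*t^2 + 16*t - 20 ≤ 0 := by
  nlinarith [sq_nonneg (t^2 - t - 4), sq_nonneg (t-1/2), sq_nonneg (t+1), sq_nonneg t,
    sq_nonneg (t^2-4)]

/-- `frakl1 0 t ≥ 0` for `0 ≤ t ≤ 1/2`. -/
lemma lemC (t : ℝ) (h0 : 0 ≤ t) (h : t ≤ 1/2) :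
    0 ≤ 4*t^6 - 4*t^5 - 93*t^4 + 78*t^3 + 240*t^2 - 408*t + 192 := by
  nlinarith [sq_nonneg t, sq_nonneg (t-1/2), mul_nonneg h0 h0,
    mul_nonneg (mul_nonneg h0 h0) h0, sq_nonneg (t^2-t)]

/-- `frakl1 s (-s) ≥ 0` for `0 ≤ s`, `s^2 ≤ 8`. -/
lemma lemG (s : ℝ) (h0 : 0 ≤ s) (h8 : s^2 ≤ 8) :
    0 ≤ 192 + 432*s + 304*s^2 + 42*s^3 - 33*s^4 - 12*s^5 - s^6 := by
  have h : 192 + 432*s + 304*s^2 + 42*s^3 - 33*s^4 - 12*s^5 - s^6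
      = (8 - s^2) * (s^4 + 12*s^3 + 41*s^2 + 54*s + 24) := by ring
  rw [h]
  have h1 : (0:ℝ) ≤ 8 - s^2 := by linarith
  have h2 : (0:ℝ) ≤ s^4 + 12*s^3 + 41*s^2 + 54*s + 24 := by positivity
  exact mul_nonneg h1 h2

/-- `400 * frakl1 (57/20) t ≥ 0` for `t ≤ 1/2`, `t^2 ≤ 8`. -/
lemma lemFb (t : ℝ) (h : t ≤ 1/2) (h8 : t^2 ≤ 8) :
    0 ≤ 1600*t^6 + 2960*t^5 - 56409*t^4 - 17022*t^3 + 290028*t^2 - 206976*t + 39180 := by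
  rcases le_or_gt 0 t with h0 | h0
  · nlinarith [sq_nonneg (t - 2/5), mul_nonneg h0 (sub_nonneg.2 h), sq_nonneg (t*(t-2/5)),
      mul_nonneg (mul_nonneg h0 h0) (sq_nonneg (t-2/5)),
      mul_nonneg (sub_nonneg.2 h) (sq_nonneg (t-2/5)), mul_nonneg h0 (sq_nonneg (t-2/5))]
  · nlinarith [sq_nonneg (t^2 + t - 8), sq_nonneg (t^2 - 8),
      mul_nonneg (neg_nonneg.2 h0.le) (sub_nonneg.2 h8), sq_nonneg (t+2), sq_nonneg (t+1),
      mul_nonneg (mul_nonneg (neg_nonneg.2 h0.le) (neg_nonneg.2 h0.le)) (sub_nonneg.2 h8),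
      sq_nonneg t, mul_nonneg (sub_nonneg.2 h8) (sub_nonneg.2 h8)]

theorem frakl1_nonneg (s t : ℝ)
    (hs0 : 0 ≤ s) (hs : s ≤ 2 * Real.sqrt 2) (hst : s + t ≥ 0) (ht : t ≤ 1/2) :
    0 ≤ frakl1 s t := by
  have h2 : Real.sqrt 2 ^ 2 = 2 := Real.sq_sqrt (by norm_num)
  have hs8 : s ^ 2 ≤ 8 := by nlinarith [Real.sqrt_nonneg 2]
  have hsb : s ≤ 57/20 := by nlinarith
  have hA := lemA t ht
  have hFb : 0 ≤ frakl1 (57/20) t := by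
    have key : frakl1 (57/20) t =
        (1600*t^6 + 2960*t^5 - 56409*t^4 - 17022*t^3 + 290028*t^2 - 206976*t + 39180) / 400 := by
      unfold frakl1; ring
    rw [key]
    have ht8 : t ^ 2 ≤ 8 := by
      rcases le_or_gt 0 t with h0 | h0
      · nlinarith
      · nlinarith [mul_nonneg hst (by linarith : (0:ℝ) ≤ s - t)]
    linarith [lemFb t ht ht8]
  rcases le_or_gt 0 t with h0 | h0
  · -- t ≥ 0 : interpolate between s = 0 and s = 57/20
    have hC : 0 ≤ frakl1 0 t := by
      have key : frakl1 0 t = 4*t^6 - 4*t^5 - 93*t^4 + 78*t^3 + 240*t^2 - 408*t + 192 := by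
        unfold frakl1; ring
      rw [key]; exact lemC t h0 ht
    have key : (57/20) * frakl1 s t =
        (57/20 - s) * frakl1 0 t + s * frakl1 (57/20) t
        + (57/20) * (-(-t^4 + 2*t^3 + 12*t^2 + 16*t - 20)) * (s * (57/20 - s)) := by
      unfold frakl1; ring
    nlinarith [mul_nonneg (by linarith : (0:ℝ) ≤ 57/20 - s) hC, mul_nonneg hs0 hFb,
      mul_nonneg (by linarith : (0:ℝ) ≤ (57:ℝ)/20 * (-(-t^4 + 2*t^3 + 12*t^2 + 16*t - 20)))
        (mul_nonneg hs0 (by linarith : (0:ℝ) ≤ 57/20 - s)), key]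
  · -- t < 0 : interpolate between s = -t and s = 57/20
    have ht8 : t ^ 2 ≤ 8 := by
      nlinarith [mul_nonneg hst (by linarith : (0:ℝ) ≤ s - t)]
    have hbt : (0:ℝ) < 57/20 + t := by nlinarith
    have hG : 0 ≤ frakl1 (-t) t := by
      have key : frakl1 (-t) t =
          192 + 432*(-t) + 304*(-t)^2 + 42*(-t)^3 - 33*(-t)^4 - 12*(-t)^5 - (-t)^6 := by
        unfold frakl1; ring
      rw [key]; exact lemG (-t) (by linarith) (by nlinarith)
    have key : (57/20 + t) * frakl1 s t =
        (57/20 - s) * frakl1 (-t) t + (s + t) * frakl1 (57/20) t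
        + (57/20 + t) * (-(-t^4 + 2*t^3 + 12*t^2 + 16*t - 20)) * ((s + t) * (57/20 - s)) := by
      unfold frakl1; ring
    have hprod : 0 ≤ (57/20 + t) * frakl1 s t := by
      rw [key]
      have t1 := mul_nonneg (by linarith : (0:ℝ) ≤ 57/20 - s) hG
      have t2 := mul_nonneg hst hFb
      have t3 := mul_nonneg (mul_nonneg hbt.le (by linarith :
        (0:ℝ) ≤ -(-t^4 + 2*t^3 + 12*t^2 + 16*t - 20)))
        (mul_nonneg hst (by linarith : (0:ℝ) ≤ 57/20 - s))
      linarith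
    exact nonneg_of_mul_nonneg_right hprod hbt
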